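/- Fix λ ∈ ℝ and let 𝔊₁₀^λ be the 7-dimensional real Lie algebra with basis (X₁,X₂,X₃,X₄,X₅,X,Y) and nonzero brackets [X₁,X₂]=X₄, [X₁,X₃]=X₅, [X,X₂]=X₂, [X,X₃]=λX₃, [X,X₄]=X₄, [X,X₅]=λX₅, [Y,X₃]=X₃+X₅, [Y,X₅]=X₅. For F ∈ (𝔊₁₀^λ)* with coordinates (α₁,α₂,α₃,α₄,α₅,α,β) in the dual basis, let B_F be the skew-symmetric bilinear form on 𝔊₁₀^λ defined by B_F(A,B) = ⟨F,[A,B]⟩. Then the rank of B_F equals 6 if and only if either (α₄ = 0 and α₂α₅ ≠ 0) or (α₄ ≠ 0 and (α₃ ≠ 0 or α₅ ≠ 0)); in particular the maximal possible rank of B_F over all F is 6. -/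

import Mathlib

noncomputable section

/-- Half of the structure constants of the Lie algebra 𝔊₁₀^λ: `g10half l i j` is the
coordinate vector of `[Xᵢ, Xⱼ]` for the ordered pairs `(i,j)` listed in the paper
(indices `0,…,4` are `X₁,…,X₅`, index `5` is `X`, index `6` is `Y`). -/
def g10half (l : ℝ) (i j : Fin 7) : Fin 7 → ℝ :=
  if i = 0 ∧ j = 1 then Pi.single 3 1      -- [X₁,X₂] = X₄
  else if i = 0 ∧ j = 2 then Pi.single 4 1 -- [X₁,X₃] = X₅
  else if i = 5 ∧ j = 1 then Pi.single 1 1 -- [X,X₂] = X₂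
  else if i = 5 ∧ j = 2 then Pi.single 2 l -- [X,X₃] = λX₃
  else if i = 5 ∧ j = 3 then Pi.single 3 1 -- [X,X₄] = X₄
  else if i = 5 ∧ j = 4 then Pi.single 4 l -- [X,X₅] = λX₅
  else if i = 6 ∧ j = 2 then Pi.single 2 1 + Pi.single 4 1 -- [Y,X₃] = X₃+X₅
  else if i = 6 ∧ j = 4 then Pi.single 4 1 -- [Y,X₅] = X₅
  else 0

/-- The bracket `[Xᵢ, Xⱼ]` (in coordinates) of basis vectors of 𝔊₁₀^λ. -/
def g10br (l : ℝ) (i j : Fin 7) : Fin 7 → ℝ := g10half l i j - g10half l j i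

/-- The Gram matrix of the bilinear form `B_F(A,B) = ⟨F,[A,B]⟩` in the given basis,
where `α` is the coordinate vector of `F` in the dual basis. -/
def gramG10 (l : ℝ) (α : Fin 7 → ℝ) : Matrix (Fin 7) (Fin 7) ℝ :=
  Matrix.of fun i j => ∑ k, α k * g10br l i j k

/-!
`B_F` is skew-symmetric of odd size, so its determinant vanishes and its rank is at most 6.
If the condition on `F` fails, two rows of the Gram matrix vanish and the rank is at most 5.
If it holds, six rows and six columns can be chosen so that the minor they cut out is upper
triangular with diagonal entries among `±α₂, ±α₄, ±α₅, ±(α₃ + α₅)`, all nonzero.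
-/

namespace Matrix

variable {R K m n n' : Type*} [Fintype n]

theorem det_eq_zero_of_transpose_eq_neg [DecidableEq n] [CommRing R] [IsAddTorsionFree R]
    {A : Matrix n n R} (hA : Aᵀ = -A) (hn : Odd (Fintype.card n)) : A.det = 0 := by
  refine self_eq_neg.mp ?_
  calc A.det = Aᵀ.det := (det_transpose A).symm
    _ = -A.det := by rw [hA, det_neg, hn.neg_one_pow, neg_one_mul]

theorem rank_lt_card_of_det_eq_zero [DecidableEq n] [Field K] {A : Matrix n n K}
    (hA : A.det = 0) : A.rank < Fintype.card n := by
  refine lt_of_le_of_ne A.rank_le_card_width fun h => ?_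
  rw [rank_eq_finrank_span_cols] at h
  have hunit := linearIndependent_cols_iff_isUnit.mp
    (linearIndependent_iff_card_eq_finrank_span.mpr h.symm)
  rw [isUnit_iff_isUnit_det, hA] at hunit
  exact not_isUnit_zero hunit

theorem card_le_rank_of_isUpperTriangular_submatrix [Fintype m] [LinearOrder m] [CommRing R]
    [IsDomain R] (A : Matrix n' n R) (r : m → n') (c : m → n) (hA : (A.submatrix r c).IsUpperTriangular)
    (hd : ∀ i, A (r i) (c i) ≠ 0) : Fintype.card m ≤ A.rank := by
  have hdet : (A.submatrix r c).det ≠ 0 := by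
    rw [det_of_isUpperTriangular hA]
    exact Finset.prod_ne_zero_iff.mpr fun i _ => hd i
  exact (rank_of_det_ne_zero hdet).ge.trans (rank_submatrix_le A r c)

theorem rank_le_card_sub_two_of_row_eq_zero [Fintype m] [DecidableEq m] [CommSemiring R]
    [StrongRankCondition R] (A : Matrix m n R) {i j : m} (hij : i ≠ j) (hi : A i = 0) (hj : A j = 0) :
    A.rank ≤ Fintype.card m - 2 := by
  have hs : Function.support A.row ⊆ ↑(Finset.univ \ {i, j}) := by
    refine Function.support_subset_iff'.mpr fun k hk => ?_
    obtain rfl | rfl : k = i ∨ k = j := by simpa [or_iff_not_imp_left] using hk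
    exacts [hi, hj]
  simpa [Finset.card_sdiff, Finset.card_pair hij] using A.rank_le_card_of_support_subset _ hs

end Matrix

open Matrix

section G10

variable (l : ℝ) (α : Fin 7 → ℝ)

theorem gramG10_eq : gramG10 l α =
    !![0, α 3, α 4, 0, 0, 0, 0;
       -α 3, 0, 0, 0, 0, -α 1, 0;
       -α 4, 0, 0, 0, 0, -(α 2 * l), -(α 2 + α 4);
       0, 0, 0, 0, 0, -α 3, 0;
       0, 0, 0, 0, 0, -(α 4 * l), -α 4;
       0, α 1, α 2 * l, α 3, α 4 * l, 0, 0;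
       0, 0, α 2 + α 4, 0, α 4, 0, 0] := by
  ext i j
  fin_cases i <;> fin_cases j <;> simp [gramG10, g10br, g10half, Fin.sum_univ_seven]
  ring

theorem g10br_swap (i j : Fin 7) : g10br l j i = -g10br l i j :=
  (neg_sub _ _).symm

theorem gramG10_transpose : (gramG10 l α)ᵀ = -gramG10 l α := by
  ext i j
  simp [gramG10, g10br_swap l i j]

theorem rank_gramG10_le_six : (gramG10 l α).rank ≤ 6 :=
  Nat.le_of_lt_succ <| by
    simpa using rank_lt_card_of_det_eq_zero <|
      det_eq_zero_of_transpose_eq_neg (gramG10_transpose l α) (by decide)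

theorem rank_gramG10_le_five
    (h : ¬((α 3 = 0 ∧ α 1 * α 4 ≠ 0) ∨ (α 3 ≠ 0 ∧ (α 2 ≠ 0 ∨ α 4 ≠ 0)))) :
    (gramG10 l α).rank ≤ 5 := by
  obtain ⟨i, j, hij, hi, hj⟩ :
      ∃ i j : Fin 7, i ≠ j ∧ gramG10 l α i = 0 ∧ gramG10 l α j = 0 := by
    push Not at h
    obtain ⟨h14, h24⟩ := h
    rw [gramG10_eq]
    by_cases h3 : α 3 = 0
    · rcases mul_eq_zero.mp (h14 h3) with h1 | h4
      · exact ⟨1, 3, by decide, by ext k; fin_cases k <;> simp [h1, h3],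
          by ext k; fin_cases k <;> simp [h3]⟩
      · exact ⟨3, 4, by decide, by ext k; fin_cases k <;> simp [h3],
          by ext k; fin_cases k <;> simp [h4]⟩
    · obtain ⟨h2, h4⟩ := h24 h3
      exact ⟨2, 4, by decide, by ext k; fin_cases k <;> simp [h2, h4],
        by ext k; fin_cases k <;> simp [h4]⟩
  simpa using rank_le_card_sub_two_of_row_eq_zero _ hij hi hj

theorem six_le_rank_gramG10
    (h : (α 3 = 0 ∧ α 1 * α 4 ≠ 0) ∨ (α 3 ≠ 0 ∧ (α 2 ≠ 0 ∨ α 4 ≠ 0))) :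
    6 ≤ (gramG10 l α).rank := by
  obtain ⟨r, c, htri, hdiag⟩ : ∃ r c : Fin 6 → Fin 7,
      ((gramG10 l α).submatrix r c).IsUpperTriangular ∧ ∀ i, gramG10 l α (r i) (c i) ≠ 0 := by
    rw [gramG10_eq]
    rcases h with ⟨h3, h14⟩ | ⟨h3, h24⟩
    · obtain ⟨h1, h4⟩ := mul_ne_zero_iff.mp h14
      refine ⟨![5, 2, 6, 0, 4, 1], ![1, 0, 4, 2, 6, 5], fun i j hij => ?_, fun i => ?_⟩
      · fin_cases i <;> fin_cases j <;> simp_all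
      · fin_cases i <;> simp [h1, h4]
    by_cases h4 : α 4 = 0
    · have h2 : α 2 ≠ 0 := h24.resolve_right (not_not.mpr h4)
      refine ⟨![5, 1, 0, 6, 2, 3], ![3, 0, 1, 2, 6, 5], fun i j hij => ?_, fun i => ?_⟩
      · fin_cases i <;> fin_cases j <;> simp_all
      · fin_cases i <;> simp [h2, h3, h4]
    · refine ⟨![5, 1, 0, 6, 4, 3], ![3, 0, 1, 4, 6, 5], fun i j hij => ?_, fun i => ?_⟩
      · fin_cases i <;> fin_cases j <;> simp_all
      · fin_cases i <;> simp [h3, h4]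
  simpa using card_le_rank_of_isUpperTriangular_submatrix _ r c htri hdiag

end G10

/-- For `F ∈ (𝔊₁₀^λ)*` with coordinates `(α₁,…,α₅,α,β)`, the rank of `B_F` is `6`
iff either (`α₄ = 0` and `α₂α₅ ≠ 0`) or (`α₄ ≠ 0` and (`α₃ ≠ 0` or `α₅ ≠ 0`));
in particular the maximal rank is `6`. -/
theorem rank_BF_G10 (l : ℝ) :
    (∀ α : Fin 7 → ℝ, (gramG10 l α).rank ≤ 6) ∧
    (∀ α : Fin 7 → ℝ,
      (gramG10 l α).rank = 6 ↔
        ((α 3 = 0 ∧ α 1 * α 4 ≠ 0) ∨ (α 3 ≠ 0 ∧ (α 2 ≠ 0 ∨ α 4 ≠ 0)))) := by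
  refine ⟨rank_gramG10_le_six l, fun α => ⟨fun h6 => ?_, fun h => ?_⟩⟩
  · by_contra h
    have := rank_gramG10_le_five l α h
    omega
  · exact le_antisymm (rank_gramG10_le_six l α) (six_le_rank_gramG10 l α h)

end
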